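/- arXiv:1904.00075 — 3 statements merged into one kernel-verified Lean document; each statement's English description precedes it below -/
import Mathlib

section
/- For any compact set $K \subset \mathbb{R}$ there exists $L_K > 0$ such that $\sup_{t\in[0,1]} |v(t,y) - v(t,x)| \le L_K |y - x|$ for all $x, y \in K$; one can take $L_K = c_1 \max_{x\in K} e^{|x|}$ with $c_1 = \mathsf{E}[\sup_{0\le s\le 1} e^{|W_s|}]$. -/
open MeasureTheory ProbabilityTheory Real Set Filter

noncomputable section

/-- A standard one-dimensional Brownian motion on `[0, ∞)`. -/
structure IsBrownianMotion {Ω : Type*} [MeasurableSpace Ω] (μ : Measure Ω)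
    (W : ℝ → Ω → ℝ) : Prop where
  isProb : IsProbabilityMeasure μ
  meas : ∀ t : ℝ, Measurable (W t)
  init : ∀ ω, W 0 ω = 0
  cont : ∀ ω, Continuous fun t => W t ω
  incr_law : ∀ s t : ℝ, 0 ≤ s → s ≤ t →
    Measure.map (fun ω => W t ω - W s ω) μ = gaussianReal 0 (Real.toNNReal (t - s))
  indep_incr : ∀ n : ℕ, ∀ u : ℕ → ℝ, Monotone u → 0 ≤ u 0 →
    iIndepFun
      (fun i : Fin n => fun ω => W (u (i + 1)) ω - W (u i) ω) μ

variable {Ω : Type*} [MeasurableSpace Ω]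

/-- The Wiener integral `∫_t^s dW_u/(1-u)`, defined pathwise via integration by parts. -/
def bridgeInt (W : ℝ → Ω → ℝ) (t s : ℝ) (ω : Ω) : ℝ :=
  W s ω / (1 - s) - W t ω / (1 - t) - ∫ u in t..s, W u ω / (1 - u) ^ 2

/-- The Brownian bridge started from `x` at time `t` and pinned at `0` at time `1`:
`X^{t,x}_s = (1-s) (x/(1-t) + ∫_t^s dW_u/(1-u))`. -/
def bridge (W : ℝ → Ω → ℝ) (t x s : ℝ) (ω : Ω) : ℝ :=
  (1 - s) * (x / (1 - t) + bridgeInt W t s ω)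

/-- The process `Z^{t,x}_s = ((1-s)/(1-t)) x + sqrt((1-s)/(1-t)) W_{s-t}`. -/
def Zproc (W : ℝ → Ω → ℝ) (t x s : ℝ) (ω : Ω) : ℝ :=
  (1 - s) / (1 - t) * x + Real.sqrt ((1 - s) / (1 - t)) * W (s - t) ω

/-- The natural filtration of `W`, as a σ-algebra at time `s`. -/
def natSigma (W : ℝ → Ω → ℝ) (s : ℝ) : MeasurableSpace Ω :=
  ⨆ u ∈ Set.Iic s, MeasurableSpace.comap (W u) inferInstance

/-- `τ` is a stopping time of the natural filtration of `W`. -/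
def IsStoppingTimeFor (W : ℝ → Ω → ℝ) (τ : Ω → ℝ) : Prop :=
  ∀ s : ℝ, MeasurableSet[natSigma W s] {ω | τ ω ≤ s}

/-- The value function `v(t,x) = sup_{0 ≤ τ ≤ 1-t} E[exp(Z^{t,x}_{t+τ})]`, the supremum being
taken over stopping times `τ` of the (time-shifted) natural filtration of `W`. -/
def value (μ : Measure Ω) (W : ℝ → Ω → ℝ) (t x : ℝ) : ℝ :=
  sSup {r : ℝ | ∃ τ : Ω → ℝ, IsStoppingTimeFor W (fun ω => t + τ ω) ∧
    (∀ ω, τ ω ∈ Set.Icc 0 (1 - t)) ∧ r = ∫ ω, Real.exp (Zproc W t x (t + τ ω) ω) ∂μ}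

/-- The optimal stopping boundary `b(t) = sup{x : v(t,x) > e^x}`, with `b(1) = 0`. -/
def boundary (μ : Measure Ω) (W : ℝ → Ω → ℝ) (t : ℝ) : ℝ :=
  if t = 1 then 0 else sSup {x : ℝ | Real.exp x < value μ W t x}

/-- `S_1 = sup_{0 ≤ s ≤ 1} |W_s|`. -/
def supAbsW (W : ℝ → Ω → ℝ) (ω : Ω) : ℝ := ⨆ s : Set.Icc (0:ℝ) 1, |W s ω|

/-! Writing `θ = (1 - (t + τ)) / (1 - t) ∈ [0, 1]`, one has `Z^{t,x}_{t+τ} = θ x + √θ W_τ`,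
so `x ↦ Z^{t,x}_{t+τ}` is 1-Lipschitz and `|Z^{t,x}_{t+τ}| ≤ |x| + S₁`, where
`S₁ = sup_{[0,1]} |W|`. By the mean value theorem the expected payoffs of a fixed stopping rule
at `x` and `y` then differ by at most `E[e^{S₁}] e^{max(|x|, |y|)} |y - x|`, and this bound
passes to the suprema over all stopping rules. The probabilistic input is `E[e^{S₁}] < ∞`:
Ottaviani's maximal inequality on the dyadic grids, fed with the independence and the Gaussian
tails of the increments, gives `P(S₁ > a + 2) ≤ 4 e^{-a²/2}`. -/

open scoped NNReal Topology

variable {μ : Measure Ω} {W : ℝ → Ω → ℝ}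

lemma hasSubgaussianMGF_of_map_eq_gaussianReal {X : Ω → ℝ} {v : ℝ≥0}
    (hX : AEMeasurable X μ) (h : μ.map X = gaussianReal 0 v) : HasSubgaussianMGF X v μ := by
  rw [← HasSubgaussianMGF.id_map_iff hX, h]
  exact ⟨integrable_exp_mul_gaussianReal, fun t => by simp [mgf_id_gaussianReal]⟩

lemma ProbabilityTheory.HasSubgaussianMGF.mono {X : Ω → ℝ} {c c' : ℝ≥0}
    (h : HasSubgaussianMGF X c μ) (hc : c ≤ c') : HasSubgaussianMGF X c' μ :=
  ⟨h.integrable_exp_mul, fun t => (h.mgf_le t).trans (exp_le_exp.2 (by gcongr))⟩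

lemma ProbabilityTheory.HasSubgaussianMGF.measureReal_abs_ge_le {X : Ω → ℝ} {c : ℝ≥0}
    [IsFiniteMeasure μ] (h : HasSubgaussianMGF X c μ) {ε : ℝ} (hε : 0 ≤ ε) :
    μ.real {ω | ε ≤ |X ω|} ≤ 2 * rexp (-ε ^ 2 / (2 * c)) := by
  have hsplit : {ω | ε ≤ |X ω|} = {ω | ε ≤ X ω} ∪ {ω | ε ≤ (-X) ω} := by
    ext ω; simp only [mem_union, mem_ofPred_eq, Pi.neg_apply, le_abs]
  calc μ.real {ω | ε ≤ |X ω|}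
      ≤ μ.real {ω | ε ≤ X ω} + μ.real {ω | ε ≤ (-X) ω} := hsplit ▸ measureReal_union_le _ _
    _ ≤ _ := by linarith [h.measure_ge_le hε, h.neg.measure_ge_le hε]

lemma measureReal_iUnion_le_of_monotone [IsFiniteMeasure μ] {s : ℕ → Set Ω} (hs : Monotone s)
    {b : ℝ} (hb : 0 ≤ b) (h : ∀ n, μ.real (s n) ≤ b) : μ.real (⋃ n, s n) ≤ b := by
  refine ENNReal.toReal_le_of_le_ofReal hb ?_
  rw [hs.measure_iUnion]
  exact iSup_le fun n => by rw [← ofReal_measureReal]; exact ENNReal.ofReal_le_ofReal (h n)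

section Ottaviani

variable {S : ℕ → Ω → ℝ}

omit [MeasurableSpace Ω] in
lemma disjointed_setOf_le_abs_eq_preimage (r : ℝ) (k : ℕ) :
    disjointed (fun k => {ω | r ≤ |S k ω|}) k = (fun ω (j : Fin (k + 1)) => S j ω) ⁻¹'
      {p | r ≤ |p (Fin.last k)| ∧ ∀ j : Fin (k + 1), (j : ℕ) < k → |p j| < r} := by
  ext ω
  simp only [disjointed_eq_inter_compl, mem_inter_iff, mem_iInter, mem_compl_iff, mem_ofPred_eq,
    not_le, mem_preimage, Fin.val_last]
  exact and_congr_right' ⟨fun h j hj => h j hj, fun h j hj => h ⟨j, by omega⟩ hj⟩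

lemma measurableSet_setOf_first_le_abs (r : ℝ) (k : ℕ) :
    MeasurableSet {p : Fin (k + 1) → ℝ |
      r ≤ |p (Fin.last k)| ∧ ∀ j : Fin (k + 1), (j : ℕ) < k → |p j| < r} := by
  simp only [ofPred_and, ofPred_forall]
  exact (measurableSet_le measurable_const (measurable_pi_apply _).abs).inter
    (.iInter fun _ => .iInter fun _ =>
      measurableSet_lt (measurable_pi_apply _).abs measurable_const)

lemma measureReal_disjointed_le_of_indepFun [IsFiniteMeasure μ] {N k : ℕ} {s t c : ℝ}
    (hind : IndepFun (fun ω (j : Fin (k + 1)) => S j ω) (fun ω => S N ω - S k ω) μ)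
    (hc : μ.real {ω | t ≤ |S N ω - S k ω|} ≤ c) :
    (1 - c) * μ.real (disjointed (fun k => {ω | s + t ≤ |S k ω|}) k)
      ≤ μ.real (disjointed (fun k => {ω | s + t ≤ |S k ω|}) k ∩ {ω | s ≤ |S N ω|}) := by
  set A := disjointed (fun k => {ω | s + t ≤ |S k ω|}) k
  set C := {ω | t ≤ |S N ω - S k ω|}
  have hcover : A ⊆ (A ∩ {ω | s ≤ |S N ω|}) ∪ (A ∩ C) := by
    intro ω hω
    by_cases hB : s ≤ |S N ω|
    · exact .inl ⟨hω, hB⟩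
    · have hk : s + t ≤ |S k ω| := disjointed_subset _ k hω
      refine .inr ⟨hω, ?_⟩
      show t ≤ |S N ω - S k ω|
      linarith [abs_sub_abs_le_abs_sub (S k ω) (S N ω), abs_sub_comm (S k ω) (S N ω)]
  have hmul : μ.real (A ∩ C) = μ.real A * μ.real C := by
    have h := hind.measure_inter_preimage_eq_mul _ _ (measurableSet_setOf_first_le_abs (s + t) k)
      (measurableSet_le measurable_const measurable_abs : MeasurableSet {x : ℝ | t ≤ |x|})
    rw [← disjointed_setOf_le_abs_eq_preimage] at h
    simp only [measureReal_def, ← ENNReal.toReal_mul]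
    exact congrArg ENNReal.toReal h
  have hA : 0 ≤ μ.real A := measureReal_nonneg
  have hsplit := (measureReal_mono (μ := μ) hcover).trans (measureReal_union_le _ _)
  nlinarith

theorem ottaviani_inequality [IsFiniteMeasure μ] (hS : ∀ k, Measurable (S k)) {N : ℕ}
    {s t c : ℝ}
    (hind : ∀ k ≤ N, IndepFun (fun ω (j : Fin (k + 1)) => S j ω) (fun ω => S N ω - S k ω) μ)
    (hc : ∀ k ≤ N, μ.real {ω | t ≤ |S N ω - S k ω|} ≤ c) :
    (1 - c) * μ.real {ω | ∃ k ≤ N, s + t ≤ |S k ω|} ≤ μ.real {ω | s ≤ |S N ω|} := by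
  set E := fun k => {ω | s + t ≤ |S k ω|}
  have hmeas : ∀ k, MeasurableSet (disjointed E k) := fun k =>
    .disjointed (fun k => measurableSet_le measurable_const (hS k).abs) k
  have hdisj : (↑(Finset.range (N + 1)) : Set ℕ).PairwiseDisjoint (disjointed E) :=
    (disjoint_disjointed E).set_pairwise _
  have hunion : {ω | ∃ k ≤ N, s + t ≤ |S k ω|} = ⋃ k ∈ Finset.range (N + 1), disjointed E k := by
    rw [biUnion_range_succ_disjointed, partialSups_eq_biSup]
    ext ω; simp [E]
  calc (1 - c) * μ.real {ω | ∃ k ≤ N, s + t ≤ |S k ω|}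
      = ∑ k ∈ Finset.range (N + 1), (1 - c) * μ.real (disjointed E k) := by
        rw [hunion, measureReal_biUnion_finset hdisj fun k _ => hmeas k, Finset.mul_sum]
    _ ≤ ∑ k ∈ Finset.range (N + 1), μ.real (disjointed E k ∩ {ω | s ≤ |S N ω|}) :=
        Finset.sum_le_sum fun k hk => measureReal_disjointed_le_of_indepFun
          (hind k (Finset.mem_range_succ_iff.1 hk)) (hc k (Finset.mem_range_succ_iff.1 hk))
    _ = μ.real (⋃ k ∈ Finset.range (N + 1), disjointed E k ∩ {ω | s ≤ |S N ω|}) :=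
        (measureReal_biUnion_finset (hdisj.mono fun k => inter_subset_left)
          fun k _ => (hmeas k).inter (measurableSet_le measurable_const (hS N).abs)).symm
    _ ≤ μ.real {ω | s ≤ |S N ω|} := measureReal_mono (iUnion₂_subset fun k _ => inter_subset_right)

end Ottaviani

lemma bddAbove_range_abs_of_continuous {f : ℝ → ℝ} (hf : Continuous f) :
    BddAbove (range fun s : Icc (0:ℝ) 1 => |f s|) :=
  (isCompact_range (by fun_prop)).bddAbove

omit [MeasurableSpace Ω] in
lemma abs_le_supAbsW {ω : Ω} (hW : Continuous fun s => W s ω) {s : ℝ} (hs : s ∈ Icc (0:ℝ) 1) :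
    |W s ω| ≤ supAbsW W ω :=
  le_ciSup (bddAbove_range_abs_of_continuous hW) (⟨s, hs⟩ : Icc (0:ℝ) 1)

omit [MeasurableSpace Ω] in
lemma supAbsW_nonneg {ω : Ω} (hW : Continuous fun s => W s ω) : 0 ≤ supAbsW W ω :=
  (abs_nonneg _).trans (abs_le_supAbsW hW (left_mem_Icc.2 zero_le_one))

lemma dyadic_mem_Icc {n k : ℕ} (hk : k ≤ 2 ^ n) : (k / 2 ^ n : ℝ) ∈ Icc (0:ℝ) 1 :=
  ⟨by positivity, div_le_one_of_le₀ (by exact_mod_cast hk) (by positivity)⟩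

omit [MeasurableSpace Ω] in
lemma lt_supAbsW_iff {ω : Ω} (hW : Continuous fun s => W s ω) {c : ℝ} :
    c < supAbsW W ω ↔ ∃ n k : ℕ, k ≤ 2 ^ n ∧ c < |W (k / 2 ^ n) ω| := by
  constructor
  · intro hc
    obtain ⟨⟨s, hs⟩, hcs⟩ := (lt_ciSup_iff (bddAbove_range_abs_of_continuous hW)).1 hc
    have hopen : IsOpen {r | c < |W r ω|} := isOpen_lt continuous_const (by fun_prop)
    have hlim : Tendsto (fun n : ℕ => (⌊s * 2 ^ n⌋₊ : ℝ) / 2 ^ n) atTop (𝓝 s) :=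
      (tendsto_nat_floor_mul_div_atTop hs.1).comp
        (tendsto_pow_atTop_atTop_of_one_lt one_lt_two)
    obtain ⟨n, hn⟩ := (hlim.eventually (hopen.mem_nhds hcs)).exists
    refine ⟨n, ⌊s * 2 ^ n⌋₊, Nat.floor_le_of_le ?_, hn⟩
    push_cast
    nlinarith [hs.2, pow_pos (two_pos (α := ℝ)) n]
  · rintro ⟨n, k, hk, hc⟩
    exact hc.trans_le (abs_le_supAbsW hW (dyadic_mem_Icc hk))

lemma measurable_supAbsW (hW : ∀ t, Measurable (W t)) (hc : ∀ ω, Continuous fun s => W s ω) :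
    Measurable (supAbsW W) := by
  refine measurable_of_Ioi fun c => ?_
  have : supAbsW W ⁻¹' Ioi c =
      ⋃ (n : ℕ) (k : ℕ) (_ : k ≤ 2 ^ n), {ω | c < |W (k / 2 ^ n) ω|} := by
    ext ω; simp [lt_supAbsW_iff (hc ω)]
  rw [this]
  exact .iUnion fun n => .iUnion fun k => .iUnion fun _ =>
    measurableSet_lt measurable_const (hW _).abs

omit [MeasurableSpace Ω] in
lemma monotone_setOf_exists_dyadic_lt_abs (c : ℝ) :
    Monotone fun n : ℕ => {ω | ∃ k : ℕ, k ≤ 2 ^ n ∧ c < |W (k / 2 ^ n) ω|} := by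
  refine monotone_nat_of_le_succ fun n ω ⟨k, hk, hc⟩ => ⟨2 * k, by rw [pow_succ]; omega, ?_⟩
  have hq : ((2 * k : ℕ) : ℝ) / 2 ^ (n + 1) = k / 2 ^ n := by
    rw [pow_succ]; push_cast; field_simp
  rwa [hq]

lemma Fin.sum_filter_lt_sub {G : Type*} [AddCommGroup G] {N j : ℕ} (hj : j ≤ N) (f : ℕ → G) :
    ∑ i ∈ Finset.univ.filter (fun i : Fin N => (i : ℕ) < j), (f (i + 1) - f i) = f j - f 0 := by
  rw [Finset.sum_filter, Fin.sum_univ_eq_sum_range (fun i => if i < j then f (i + 1) - f i else 0),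
    ← Finset.sum_filter, show (Finset.range N).filter (· < j) = Finset.range j by ext; simp; omega,
    Finset.sum_range_sub]

namespace IsBrownianMotion

lemma indepFun_grid (hW : IsBrownianMotion μ W) {u : ℕ → ℝ} (hu : Monotone u)
    (hu0 : u 0 = 0) {k N : ℕ} (hk : k ≤ N) :
    IndepFun (fun ω (j : Fin (k + 1)) => W (u j) ω) (fun ω => W (u N) ω - W (u k) ω) μ := by
  -- `W (u j)` for `j ≤ k` is a function of the increments `X i` with `i < k`, and
  -- `W (u N) - W (u k)` is the sum of those with `k ≤ i`.
  set X : Fin N → Ω → ℝ := fun i ω => W (u (i + 1)) ω - W (u i) ω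
  have tel : ∀ j ≤ N, ∀ ω, ∑ i ∈ Finset.univ.filter (fun i : Fin N => (i : ℕ) < j), X i ω
      = W (u j) ω := fun j hj ω => by
    rw [Fin.sum_filter_lt_sub hj (fun i => W (u i) ω), hu0, hW.init, sub_zero]
  set S := Finset.univ.filter (fun i : Fin N => (i : ℕ) < k)
  set T := Finset.univ.filter (fun i : Fin N => k ≤ (i : ℕ))
  have hST : Disjoint S T := Finset.disjoint_filter.2 fun i _ h => not_le.2 h
  have hindep := (hW.indep_incr N u hu (hu0 ▸ le_rfl)).indepFun_finset S T hST
    fun i => (hW.meas _).sub (hW.meas _)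
  have hφ : Measurable fun (v : S → ℝ) (j : Fin (k + 1)) =>
      ∑ i ∈ Finset.univ.filter (fun i : S => ((i : Fin N) : ℕ) < j), v i := by
    fun_prop
  have hψ : Measurable fun (v : T → ℝ) => ∑ i, v i := by fun_prop
  convert hindep.comp hφ hψ using 1
  · ext ω j
    have hj : (j : ℕ) ≤ k := Nat.lt_succ_iff.1 j.isLt
    simp only [Function.comp_apply]
    rw [Finset.sum_filter, Finset.sum_coe_sort S (fun i => if (i : ℕ) < j then X i ω else 0),
      ← Finset.sum_filter, Finset.filter_filter, ← tel j (hj.trans hk)]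
    congr 1
    ext i
    simp only [Finset.mem_filter, Finset.mem_univ, true_and]
    omega
  · ext ω
    have hsplit := Finset.sum_filter_add_sum_filter_not Finset.univ
      (fun i : Fin N => (i : ℕ) < k) (fun i => X i ω)
    simp only [not_lt] at hsplit
    have hN := tel N le_rfl ω
    rw [Finset.filter_true_of_mem fun i _ => i.isLt] at hN
    change _ = ∑ i : T, X i ω
    rw [Finset.sum_coe_sort T (fun i => X i ω)]
    linarith [tel k hk ω]

lemma measureReal_abs_sub_ge_le (hW : IsBrownianMotion μ W) {s t ε : ℝ} (hs : 0 ≤ s)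
    (hst : s ≤ t) (h1 : t - s ≤ 1) (hε : 0 ≤ ε) :
    μ.real {ω | ε ≤ |W t ω - W s ω|} ≤ 2 * rexp (-ε ^ 2 / 2) := by
  have := hW.isProb
  have hX := hasSubgaussianMGF_of_map_eq_gaussianReal ((hW.meas t).sub (hW.meas s)).aemeasurable
    (hW.incr_law s t hs hst)
  simpa using (hX.mono (toNNReal_le_one.2 h1)).measureReal_abs_ge_le hε

lemma measureReal_abs_ge_le (hW : IsBrownianMotion μ W) {ε : ℝ} (hε : 0 ≤ ε) :
    μ.real {ω | ε ≤ |W 1 ω|} ≤ 2 * rexp (-ε ^ 2 / 2) := by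
  simpa [hW.init] using hW.measureReal_abs_sub_ge_le le_rfl zero_le_one (by norm_num) hε

lemma measureReal_exists_dyadic_lt_abs_le (hW : IsBrownianMotion μ W) {a : ℝ} (ha : 0 ≤ a) (n : ℕ) :
    μ.real {ω | ∃ k : ℕ, k ≤ 2 ^ n ∧ a + 2 < |W (k / 2 ^ n) ω|} ≤ 4 * rexp (-a ^ 2 / 2) := by
  have := hW.isProb
  set u : ℕ → ℝ := fun k => k / 2 ^ n
  have hu : Monotone u := fun i j hij => by simp only [u]; gcongr
  have hu1 : u (2 ^ n) = 1 := by simp [u]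
  have hsmall : ∀ k ≤ 2 ^ n, μ.real {ω | 2 ≤ |W (u (2 ^ n)) ω - W (u k) ω|} ≤ 1 / 2 := by
    intro k hk
    have hk' := dyadic_mem_Icc hk
    rw [hu1]
    refine (hW.measureReal_abs_sub_ge_le hk'.1 hk'.2 (by linarith [hk'.1]) zero_le_two).trans ?_
    have : rexp (-2 ^ 2 / 2) = (rexp 1)⁻¹ ^ 2 := by
      rw [← exp_neg, ← exp_nat_mul]; norm_num
    rw [this]
    have h1 : 2 ≤ rexp 1 := by linarith [add_one_le_exp (1 : ℝ)]
    have h2 : (rexp 1)⁻¹ ≤ 2⁻¹ := inv_anti₀ two_pos h1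
    nlinarith [inv_pos.2 (exp_pos 1)]
  have hott := ottaviani_inequality (S := fun k => W (u k)) (s := a) (fun k => hW.meas _)
    (fun k hk => hW.indepFun_grid hu (by simp [u]) hk) hsmall
  rw [hu1] at hott
  have hsub : {ω | ∃ k : ℕ, k ≤ 2 ^ n ∧ a + 2 < |W (k / 2 ^ n) ω|}
      ⊆ {ω | ∃ k ≤ 2 ^ n, a + 2 ≤ |W (u k) ω|} := fun ω ⟨k, hk, h⟩ => ⟨k, hk, h.le⟩
  linarith [measureReal_mono (μ := μ) hsub, hW.measureReal_abs_ge_le ha]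

lemma measureReal_add_two_lt_supAbsW_le (hW : IsBrownianMotion μ W) {a : ℝ} (ha : 0 ≤ a) :
    μ.real {ω | a + 2 < supAbsW W ω} ≤ 4 * rexp (-a ^ 2 / 2) := by
  have := hW.isProb
  have hunion : {ω | a + 2 < supAbsW W ω}
      = ⋃ n : ℕ, {ω | ∃ k : ℕ, k ≤ 2 ^ n ∧ a + 2 < |W (k / 2 ^ n) ω|} := by
    ext ω; simp [lt_supAbsW_iff (hW.cont ω)]
  rw [hunion]
  exact measureReal_iUnion_le_of_monotone (monotone_setOf_exists_dyadic_lt_abs _) (by positivity)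
    (hW.measureReal_exists_dyadic_lt_abs_le ha)

end IsBrownianMotion

lemma integrable_exp_of_summable [IsFiniteMeasure μ] {S : Ω → ℝ} (hS : Measurable S)
    (h0 : ∀ ω, 0 ≤ S ω) (h : Summable fun m : ℕ => rexp (m + 1) * μ.real {ω | m ≤ S ω}) :
    Integrable (fun ω => rexp (S ω)) μ := by
  refine ⟨(measurable_exp.comp hS).aestronglyMeasurable, ?_⟩
  rw [hasFiniteIntegral_iff_ofReal (ae_of_all _ fun ω => (exp_pos _).le)]
  have hmeas : ∀ m : ℕ, MeasurableSet {ω | (m : ℝ) ≤ S ω} :=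
    fun m => measurableSet_le measurable_const hS
  have hpt : ∀ ω, ENNReal.ofReal (rexp (S ω))
      ≤ ∑' m : ℕ, {ω | (m : ℝ) ≤ S ω}.indicator (fun _ => ENNReal.ofReal (rexp (m + 1))) ω := by
    intro ω
    refine le_trans ?_ (ENNReal.le_tsum ⌊S ω⌋₊)
    rw [indicator_of_mem (show ω ∈ {ω' | (⌊S ω⌋₊ : ℝ) ≤ S ω'} from Nat.floor_le (h0 ω))]
    exact ENNReal.ofReal_le_ofReal (exp_le_exp.2 (Nat.lt_floor_add_one _).le)
  calc ∫⁻ ω, ENNReal.ofReal (rexp (S ω)) ∂μ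
      ≤ ∫⁻ ω, ∑' m : ℕ, {ω | (m : ℝ) ≤ S ω}.indicator
          (fun _ => ENNReal.ofReal (rexp (m + 1))) ω ∂μ := lintegral_mono hpt
    _ = ∑' m : ℕ, ENNReal.ofReal (rexp (m + 1) * μ.real {ω | m ≤ S ω}) := by
        rw [lintegral_tsum fun m => (measurable_const.indicator (hmeas m)).aemeasurable]
        congr 1 with m
        rw [lintegral_indicator_const (hmeas m), ENNReal.ofReal_mul (exp_pos _).le,
          ofReal_measureReal]
    _ = ENNReal.ofReal (∑' m : ℕ, rexp (m + 1) * μ.real {ω | m ≤ S ω}) :=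
        (ENNReal.ofReal_tsum_of_nonneg (fun m => by positivity) h).symm
    _ < ⊤ := ENNReal.ofReal_lt_top

lemma IsBrownianMotion.integrable_exp_supAbsW (hW : IsBrownianMotion μ W) :
    Integrable (fun ω => rexp (supAbsW W ω)) μ := by
  have := hW.isProb
  refine integrable_exp_of_summable (measurable_supAbsW hW.meas hW.cont)
    (fun ω => supAbsW_nonneg (hW.cont ω)) ?_
  refine .of_nonneg_of_le (fun m => by positivity) (fun m => ?_)
    (summable_exp_neg_nat.mul_left (4 * rexp 9))
  rcases le_or_gt m 2 with hm | hm
  · have hm' : (m : ℝ) ≤ 2 := by exact_mod_cast hm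
    calc rexp (m + 1) * μ.real {ω | m ≤ supAbsW W ω} ≤ rexp (9 + -m) * 1 :=
          mul_le_mul (exp_le_exp.2 (by linarith)) measureReal_le_one measureReal_nonneg
            (exp_pos _).le
      _ ≤ 4 * rexp 9 * rexp (-m) := by rw [exp_add]; nlinarith [exp_pos 9, exp_pos (-m)]
  · have hm' : (3 : ℝ) ≤ m := by exact_mod_cast hm
    have hsub : {ω | (m : ℝ) ≤ supAbsW W ω} ⊆ {ω | (m - 3 : ℝ) + 2 < supAbsW W ω} :=
      fun ω hω => by simp only [mem_ofPred_eq] at hω ⊢; linarith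
    have htail := (measureReal_mono (μ := μ) hsub).trans
      (hW.measureReal_add_two_lt_supAbsW_le (by linarith))
    calc rexp (m + 1) * μ.real {ω | m ≤ supAbsW W ω}
        ≤ rexp (m + 1) * (4 * rexp (-(m - 3) ^ 2 / 2)) := by gcongr
      _ = 4 * rexp (m + 1 - (m - 3) ^ 2 / 2) := by rw [mul_left_comm, ← exp_add]; ring_nf
      _ ≤ 4 * rexp (9 + -m) := by gcongr; nlinarith [sq_nonneg ((m : ℝ) - 5)]
      _ = 4 * rexp 9 * rexp (-m) := by rw [exp_add]; ring

lemma abs_exp_sub_exp_le {a b c : ℝ} (ha : a ≤ c) (hb : b ≤ c) :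
    |rexp b - rexp a| ≤ rexp c * |b - a| := by
  wlog hab : a ≤ b generalizing a b
  · rw [abs_sub_comm, abs_sub_comm b]; exact this hb ha (le_of_not_ge hab)
  rw [abs_of_nonneg (sub_nonneg.2 (exp_le_exp.2 hab)), abs_of_nonneg (sub_nonneg.2 hab)]
  have hab' : rexp a = rexp b * rexp (a - b) := by rw [← exp_add, add_sub_cancel]
  calc rexp b - rexp a ≤ rexp b * (b - a) := by
        rw [hab']; nlinarith [exp_pos b, add_one_le_exp (a - b)]
    _ ≤ rexp c * (b - a) := mul_le_mul_of_nonneg_right (exp_le_exp.2 hb) (sub_nonneg.2 hab)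

lemma abs_sSup_image_sub_sSup_image_le {ι : Type*} {s : Set ι} (hs : s.Nonempty) {f g : ι → ℝ}
    (hf : BddAbove (f '' s)) (hg : BddAbove (g '' s)) {L : ℝ} (h : ∀ i ∈ s, |f i - g i| ≤ L) :
    |sSup (f '' s) - sSup (g '' s)| ≤ L := by
  have key : ∀ {f g : ι → ℝ}, BddAbove (g '' s) → (∀ i ∈ s, |f i - g i| ≤ L) →
      sSup (f '' s) ≤ sSup (g '' s) + L := fun hg h =>
    csSup_le (hs.image _) <| forall_mem_image.2 fun i hi =>
      by linarith [le_csSup hg (mem_image_of_mem _ hi), (abs_le.1 (h i hi)).2]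
  rw [abs_sub_le_iff]
  constructor
  · linarith [key hg h]
  · linarith [key hf fun i hi => (abs_sub_comm (g i) (f i)).trans_le (h i hi)]

omit [MeasurableSpace Ω] in
lemma Zproc_add (t x r : ℝ) (ω : Ω) :
    Zproc W t x (t + r) ω
      = (1 - (t + r)) / (1 - t) * x + √((1 - (t + r)) / (1 - t)) * W r ω := by
  rw [Zproc, add_sub_cancel_left]

lemma one_sub_add_div_one_sub_mem_Icc {t r : ℝ} (hr : r ∈ Icc 0 (1 - t)) :
    (1 - (t + r)) / (1 - t) ∈ Icc (0:ℝ) 1 :=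
  ⟨div_nonneg (by linarith [hr.2]) (by linarith [hr.1, hr.2]),
    div_le_one_of_le₀ (by linarith [hr.1]) (by linarith [hr.1, hr.2])⟩

omit [MeasurableSpace Ω] in
lemma abs_Zproc_le {ω : Ω} (hW : Continuous fun s => W s ω) {t r : ℝ} (ht : 0 ≤ t)
    (hr : r ∈ Icc 0 (1 - t)) (x : ℝ) :
    |Zproc W t x (t + r) ω| ≤ |x| + supAbsW W ω := by
  have hθ := one_sub_add_div_one_sub_mem_Icc hr
  have hsqrt : √((1 - (t + r)) / (1 - t)) ≤ 1 := sqrt_le_one.2 hθ.2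
  have hWr : |W r ω| ≤ supAbsW W ω := abs_le_supAbsW hW ⟨hr.1, by linarith [hr.2]⟩
  rw [Zproc_add]
  calc _ ≤ |(1 - (t + r)) / (1 - t) * x| + |√((1 - (t + r)) / (1 - t)) * W r ω| := abs_add_le _ _
    _ ≤ 1 * |x| + 1 * supAbsW W ω := by
        rw [abs_mul, abs_mul, abs_of_nonneg hθ.1, abs_of_nonneg (sqrt_nonneg _)]
        gcongr
        exact hθ.2
    _ = |x| + supAbsW W ω := by ring

omit [MeasurableSpace Ω] in
lemma abs_Zproc_sub_le {t r : ℝ} (hr : r ∈ Icc 0 (1 - t)) (x y : ℝ) (ω : Ω) :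
    |Zproc W t y (t + r) ω - Zproc W t x (t + r) ω| ≤ |y - x| := by
  have hθ := one_sub_add_div_one_sub_mem_Icc hr
  rw [Zproc_add, Zproc_add, add_sub_add_right_eq_sub, ← mul_sub, abs_mul, abs_of_nonneg hθ.1]
  exact mul_le_of_le_one_left (abs_nonneg _) hθ.2

lemma natSigma_le (hW : ∀ t, Measurable (W t)) (s : ℝ) :
    natSigma W s ≤ ‹MeasurableSpace Ω› :=
  iSup₂_le fun u _ => (hW u).comap_le

lemma IsStoppingTimeFor.measurable (hW : ∀ t, Measurable (W t)) {σ : Ω → ℝ}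
    (hσ : IsStoppingTimeFor W σ) : Measurable σ :=
  measurable_of_Iic fun s => natSigma_le hW s _ (hσ s)

omit [MeasurableSpace Ω] in
lemma isStoppingTimeFor_const (c : ℝ) : IsStoppingTimeFor W fun _ => c :=
  fun _ => MeasurableSet.const _

def admissibleDelays (W : ℝ → Ω → ℝ) (t : ℝ) : Set (Ω → ℝ) :=
  {τ | IsStoppingTimeFor W (fun ω => t + τ ω) ∧ ∀ ω, τ ω ∈ Icc 0 (1 - t)}

def expectedPayoff (μ : Measure Ω) (W : ℝ → Ω → ℝ) (t x : ℝ) (τ : Ω → ℝ) : ℝ :=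
  ∫ ω, rexp (Zproc W t x (t + τ ω) ω) ∂μ

lemma value_eq_sSup_image (μ : Measure Ω) (W : ℝ → Ω → ℝ) (t x : ℝ) :
    value μ W t x = sSup (expectedPayoff μ W t x '' admissibleDelays W t) := by
  rw [value]
  congr 1
  ext r
  simp [admissibleDelays, expectedPayoff, eq_comm, and_assoc]

namespace IsBrownianMotion

lemma measurable_exp_Zproc (hW : IsBrownianMotion μ W) (t x : ℝ) {τ : Ω → ℝ}
    (hτ : Measurable τ) : Measurable fun ω => rexp (Zproc W t x (t + τ ω) ω) := by
  have hWτ : Measurable fun ω => W (τ ω) ω :=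
    (measurable_uncurry_of_continuous_of_measurable hW.cont hW.meas).comp (hτ.prodMk measurable_id)
  have hθ : Measurable fun ω => (1 - (t + τ ω)) / (1 - t) := by fun_prop
  simp only [Zproc_add]
  exact measurable_exp.comp ((hθ.mul_const x).add (hθ.sqrt.mul hWτ))

lemma integrable_exp_Zproc (hW : IsBrownianMotion μ W) {t : ℝ} (ht : 0 ≤ t) {τ : Ω → ℝ}
    (hτ : τ ∈ admissibleDelays W t) (x : ℝ) :
    Integrable (fun ω => rexp (Zproc W t x (t + τ ω) ω)) μ := by
  have hτm : Measurable τ := by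
    simpa using (hτ.1.measurable hW.meas).sub_const t
  refine (hW.integrable_exp_supAbsW.const_mul (rexp |x|)).mono'
    (hW.measurable_exp_Zproc t x hτm).aestronglyMeasurable (ae_of_all _ fun ω => ?_)
  rw [norm_of_nonneg (exp_pos _).le, ← exp_add]
  exact exp_le_exp.2 ((le_abs_self _).trans (abs_Zproc_le (hW.cont ω) ht (hτ.2 ω) x))

lemma expectedPayoff_le (hW : IsBrownianMotion μ W) {t : ℝ} (ht : 0 ≤ t) {τ : Ω → ℝ}
    (hτ : τ ∈ admissibleDelays W t) (x : ℝ) :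
    expectedPayoff μ W t x τ ≤ rexp |x| * ∫ ω, rexp (supAbsW W ω) ∂μ := by
  rw [expectedPayoff, ← integral_const_mul]
  refine integral_mono (hW.integrable_exp_Zproc ht hτ x)
    (hW.integrable_exp_supAbsW.const_mul _) fun ω => ?_
  rw [← exp_add]
  exact exp_le_exp.2 ((le_abs_self _).trans (abs_Zproc_le (hW.cont ω) ht (hτ.2 ω) x))

lemma abs_expectedPayoff_sub_le (hW : IsBrownianMotion μ W) {t : ℝ} (ht : 0 ≤ t)
    {τ : Ω → ℝ} (hτ : τ ∈ admissibleDelays W t) {x y M : ℝ} (hx : rexp |x| ≤ M)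
    (hy : rexp |y| ≤ M) :
    |expectedPayoff μ W t y τ - expectedPayoff μ W t x τ|
      ≤ (∫ ω, rexp (supAbsW W ω) ∂μ) * M * |y - x| := by
  have hix := hW.integrable_exp_Zproc ht hτ x
  have hiy := hW.integrable_exp_Zproc ht hτ y
  have hmax : rexp (max |x| |y|) ≤ M := by
    rcases le_total |x| |y| with h | h
    · rwa [max_eq_right h]
    · rwa [max_eq_left h]
  have hpt : ∀ ω, |rexp (Zproc W t y (t + τ ω) ω) - rexp (Zproc W t x (t + τ ω) ω)|
      ≤ M * |y - x| * rexp (supAbsW W ω) := by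
    intro ω
    have hZ : ∀ z, |z| ≤ max |x| |y| → Zproc W t z (t + τ ω) ω ≤ max |x| |y| + supAbsW W ω :=
      fun z hz => (le_abs_self _).trans
        ((abs_Zproc_le (hW.cont ω) ht (hτ.2 ω) z).trans (by linarith))
    calc _ ≤ rexp (max |x| |y| + supAbsW W ω) * |y - x| :=
          (abs_exp_sub_exp_le (hZ x (le_max_left _ _)) (hZ y (le_max_right _ _))).trans
            (mul_le_mul_of_nonneg_left (abs_Zproc_sub_le (hτ.2 ω) x y ω) (exp_pos _).le)
      _ ≤ M * rexp (supAbsW W ω) * |y - x| := by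
          rw [exp_add]; gcongr
      _ = _ := by ring
  rw [expectedPayoff, expectedPayoff, ← integral_sub hiy hix]
  calc _ ≤ ∫ ω, |rexp (Zproc W t y (t + τ ω) ω) - rexp (Zproc W t x (t + τ ω) ω)| ∂μ :=
        abs_integral_le_integral_abs
    _ ≤ ∫ ω, M * |y - x| * rexp (supAbsW W ω) ∂μ :=
        integral_mono (hiy.sub hix).abs (hW.integrable_exp_supAbsW.const_mul _) hpt
    _ = _ := by rw [integral_const_mul]; ring

lemma abs_value_sub_le (hW : IsBrownianMotion μ W) {t : ℝ}
    (ht : t ∈ Icc (0:ℝ) 1) {x y M : ℝ} (hx : rexp |x| ≤ M) (hy : rexp |y| ≤ M) :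
    |value μ W t y - value μ W t x| ≤ (∫ ω, rexp (supAbsW W ω) ∂μ) * M * |y - x| := by
  have hne : (admissibleDelays W t).Nonempty :=
    ⟨fun _ => 0, isStoppingTimeFor_const (t + 0), fun _ => ⟨le_rfl, by linarith [ht.2]⟩⟩
  have hbdd : ∀ z, BddAbove (expectedPayoff μ W t z '' admissibleDelays W t) := fun z =>
    ⟨_, forall_mem_image.2 fun τ hτ => hW.expectedPayoff_le ht.1 hτ z⟩
  rw [value_eq_sSup_image, value_eq_sSup_image]
  exact abs_sSup_image_sub_sSup_image_le hne (hbdd y) (hbdd x)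
    fun τ hτ => hW.abs_expectedPayoff_sub_le ht.1 hτ hx hy

end IsBrownianMotion

/-- `x ↦ v(t,x)` is Lipschitz on compacts, uniformly in `t ∈ [0,1]`,
with constant `L_K = c₁ · max_{x ∈ K} e^{|x|}`, where `c₁ = E[e^{S_1}]`. -/
theorem value_lipschitz_space
    {Ω : Type*} [MeasurableSpace Ω] (μ : Measure Ω) (W : ℝ → Ω → ℝ)
    (hW : IsBrownianMotion μ W) (K : Set ℝ) (hK : IsCompact K) :
    (∃ L > 0, ∀ t ∈ Set.Icc (0:ℝ) 1, ∀ x ∈ K, ∀ y ∈ K,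
        |value μ W t y - value μ W t x| ≤ L * |y - x|) ∧
    (∀ t ∈ Set.Icc (0:ℝ) 1, ∀ x ∈ K, ∀ y ∈ K,
        |value μ W t y - value μ W t x|
          ≤ (∫ ω, Real.exp (supAbsW W ω) ∂μ) * (⨆ z : K, Real.exp |(z : ℝ)|)
              * |y - x|) := by
  set c₁ := ∫ ω, rexp (supAbsW W ω) ∂μ
  set M := ⨆ z : K, rexp |(z : ℝ)|
  have hbdd : BddAbove (range fun z : K => rexp |(z : ℝ)|) := by
    simpa only [image_eq_range] using (hK.image (f := fun z => rexp |z|) (by fun_prop)).bddAbove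
  have hM : ∀ z ∈ K, rexp |z| ≤ M := fun z hz => le_ciSup hbdd ⟨z, hz⟩
  have hlip : ∀ t ∈ Icc (0:ℝ) 1, ∀ x ∈ K, ∀ y ∈ K,
      |value μ W t y - value μ W t x| ≤ c₁ * M * |y - x| :=
    fun t ht x hx y hy => hW.abs_value_sub_le ht (hM x hx) (hM y hy)
  have hL : 0 ≤ c₁ * M :=
    mul_nonneg (integral_nonneg fun ω => (exp_pos _).le) (iSup_nonneg fun z => (exp_pos _).le)
  refine ⟨⟨c₁ * M + 1, by linarith, fun t ht x hx y hy => (hlip t ht x hx y hy).trans ?_⟩, hlip⟩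
  gcongr
  linarith
end
end

section
/- Fix $x > 0$, $t \in (0,1)$ and $0 < \varepsilon \le t$. Let $X^{t,x}$ and $X^{t-\varepsilon,x}$ be Brownian bridges pinned at $0$ at time $1$, started at $x$ at times $t$ and $t-\varepsilon$ respectively, driven by the same Brownian increments (i.e., coupled via $dX^{t,x}_{t+u} = -\frac{X^{t,x}_{t+u}}{1-(t+u)}du + dB_u$ and $dX^{t-\varepsilon,x}_{t-\varepsilon+u} = -\frac{X^{t-\varepsilon,x}_{t-\varepsilon+u}}{1-(t-\varepsilon+u)}du + dB_u$ for the same Brownian motion $B$ with $B_0=0$). Let $\tau^0 := \inf\{u \in [0,1-t] : X^{t,x}_{t+u} \le 0\}$. Then almost surely $X^{t-\varepsilon,x}_{t-\varepsilon+s\wedge\tau^0} \ge X^{t,x}_{t+s\wedge\tau^0} \ge 0$ for all $s \in [0,1-t]$. -/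
open MeasureTheory ProbabilityTheory Real Set Filter

noncomputable section

variable {Ω : Type*} [MeasurableSpace Ω]

/-!
Up to `τ⁰` the bridge `X^{t,x}` is nonnegative. Both bridges are driven by the same `B`, so their
difference `Y = X^{t,x} - X^{t-ε,x}` is differentiable, with
`Y' = -Y/(1-t+ε-u) - ε X^{t,x}/((1-t-u)(1-t+ε-u)) ≤ -Y/(1-t+ε-u)`: the bridge started later is
pulled harder towards `0`. Hence `Y/(1-t+ε-u)` is nonincreasing from its value `0` at `u = 0`, and
`Y ≤ 0` up to `τ⁰`.
-/

section FirstNonpositive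

variable {f : ℝ → ℝ} {a b : ℝ}

lemma sInf_nonpos_mem (hf : ContinuousOn f (Icc a b)) (hne : ∃ u ∈ Icc a b, f u ≤ 0) :
    sInf {u | u ∈ Icc a b ∧ f u ≤ 0} ∈ {u | u ∈ Icc a b ∧ f u ≤ 0} := by
  obtain ⟨u, hu, hfu⟩ := hne
  refine IsClosed.csInf_mem ?_ ⟨u, hu, hfu⟩ ⟨a, fun v hv => hv.1.1⟩
  exact hf.preimage_isClosed_of_isClosed isClosed_Icc isClosed_Iic

lemma pos_of_lt_sInf_nonpos {u : ℝ} (hu : u ∈ Icc a b)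
    (hlt : u < sInf {u | u ∈ Icc a b ∧ f u ≤ 0}) : 0 < f u := by
  by_contra! hfu
  exact hlt.not_ge (csInf_le ⟨a, fun v hv => hv.1.1⟩ ⟨hu, hfu⟩)

lemma apply_sInf_nonpos_eq_zero (hf : ContinuousOn f (Icc a b)) (hfa : 0 ≤ f a)
    (hne : ∃ u ∈ Icc a b, f u ≤ 0) : f (sInf {u | u ∈ Icc a b ∧ f u ≤ 0}) = 0 := by
  set τ := sInf {u | u ∈ Icc a b ∧ f u ≤ 0}
  obtain ⟨⟨haτ, hτb⟩, hfτ⟩ := sInf_nonpos_mem hf hne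
  obtain ⟨c, hc, hfc⟩ := intermediate_value_Icc' haτ (hf.mono (Icc_subset_Icc_right hτb))
    ⟨hfτ, hfa⟩
  have hτc : τ ≤ c :=
    csInf_le ⟨a, fun v hv => hv.1.1⟩ ⟨⟨hc.1, hc.2.trans hτb⟩, hfc.le⟩
  rwa [le_antisymm hc.2 hτc] at hfc

end FirstNonpositive

lemma hasDerivAt_of_eq_integral {g F : ℝ → ℝ} {a b C u : ℝ} (hF : ContinuousOn F (Ico a b))
    (hg : ∀ v ∈ Ico a b, g v = C + ∫ r in a..v, F r) (hu : u ∈ Ioo a b) :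
    HasDerivAt g (F u) u := by
  have hFu : ContinuousAt F u :=
    hF.continuousAt (mem_of_superset (Ioo_mem_nhds hu.1 hu.2) Ioo_subset_Ico_self)
  have hprim : HasDerivAt (fun v => C + ∫ r in a..v, F r) (F u) u := by
    refine (intervalIntegral.integral_hasDerivAt_right ?_ ?_ hFu).const_add C
    · exact (hF.mono (Icc_subset_Ico_right hu.2)).intervalIntegrable_of_Icc hu.1.le
    · exact (hF.mono Ioo_subset_Ico_self).stronglyMeasurableAtFilter isOpen_Ioo u hu
  refine hprim.congr_of_eventuallyEq ?_
  filter_upwards [Ioo_mem_nhds hu.1 hu.2] with v hv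
  exact hg v (Ioo_subset_Ico_self hv)

lemma hasDerivAt_sub_of_eq_integral {y z p q w : ℝ → ℝ} {a b x u : ℝ}
    (hy : ContinuousOn y (Ico a b)) (hz : ContinuousOn z (Ico a b))
    (hp : ContinuousOn p (Ico a b)) (hq : ContinuousOn q (Ico a b))
    (hp0 : ∀ r ∈ Ico a b, p r ≠ 0) (hq0 : ∀ r ∈ Ico a b, q r ≠ 0)
    (hyeq : ∀ v ∈ Ico a b, y v = x - (∫ r in a..v, y r / p r) + w v)
    (hzeq : ∀ v ∈ Ico a b, z v = x - (∫ r in a..v, z r / q r) + w v) (hu : u ∈ Ioo a b) :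
    HasDerivAt (fun v => y v - z v) (z u / q u - y u / p u) u := by
  have hyp : ContinuousOn (fun r => y r / p r) (Ico a b) := hy.div hp hp0
  have hzq : ContinuousOn (fun r => z r / q r) (Ico a b) := hz.div hq hq0
  refine hasDerivAt_of_eq_integral (F := fun r => z r / q r - y r / p r) (C := 0) (hzq.sub hyp)
    (fun v hv => ?_) hu
  have hsub : Icc a v ⊆ Ico a b := Icc_subset_Ico_right hv.2
  rw [intervalIntegral.integral_sub ((hzq.mono hsub).intervalIntegrable_of_Icc hv.1)
    ((hyp.mono hsub).intervalIntegrable_of_Icc hv.1), hyeq v hv, hzeq v hv]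
  ring

lemma nonpos_of_hasDerivAt_le_neg_div {Y Y' : ℝ → ℝ} {a τ c : ℝ} (hτc : τ < c)
    (hY : ContinuousOn Y (Icc a τ)) (hYa : Y a = 0)
    (hderiv : ∀ u ∈ Ioo a τ, HasDerivAt Y (Y' u) u)
    (hle : ∀ u ∈ Ioo a τ, Y' u ≤ -Y u / (c - u)) {u : ℝ} (hu : u ∈ Icc a τ) : Y u ≤ 0 := by
  have hpos : ∀ v ∈ Icc a τ, 0 < c - v := fun v hv => by linarith [hv.2]
  have hquot : ∀ v ∈ Ioo a τ,
      HasDerivAt (fun v => Y v / (c - v)) ((Y' v * (c - v) - Y v * (-1)) / (c - v) ^ 2) v :=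
    fun v hv => (hderiv v hv).div ((hasDerivAt_id v).const_sub c)
      (hpos v (Ioo_subset_Icc_self hv)).ne'
  have hanti : AntitoneOn (fun v => Y v / (c - v)) (Icc a τ) := by
    refine antitoneOn_of_deriv_nonpos (convex_Icc a τ)
      (hY.div (by fun_prop) fun v hv => (hpos v hv).ne') ?_ ?_ <;> rw [interior_Icc]
    · exact fun v hv => (hquot v hv).differentiableAt.differentiableWithinAt
    · intro v hv
      have hcv := hpos v (Ioo_subset_Icc_self hv)
      rw [(hquot v hv).deriv]
      refine div_nonpos_of_nonpos_of_nonneg ?_ (sq_nonneg _)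
      have := mul_le_mul_of_nonneg_right (hle v hv) hcv.le
      rw [div_mul_cancel₀ _ hcv.ne'] at this
      linarith
  have hquot_nonpos : Y u / (c - u) ≤ 0 := by
    simpa [hYa] using hanti (left_mem_Icc.mpr (hu.1.trans hu.2)) hu hu.1
  simpa using (div_le_iff₀ (hpos u hu)).mp hquot_nonpos

lemma div_sub_div_le_neg_sub_div {y z d₁ d₂ : ℝ} (hy : 0 ≤ y) (hd₁ : 0 < d₁) (hd : d₁ ≤ d₂) :
    z / d₂ - y / d₁ ≤ -(y - z) / d₂ := by
  have : y / d₂ ≤ y / d₁ := div_le_div_of_nonneg_left hy hd₁ hd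
  rw [neg_sub, sub_div]
  linarith

/-- Here `Xt u` stands for `X^{t,x}_{t+u}` and `Xe u` for `X^{t-ε,x}_{t-ε+u}`. -/
theorem shifted_bridge_comparison_general
    {Ω : Type*} [MeasurableSpace Ω] (μ : Measure Ω) (B : ℝ → Ω → ℝ)
    (hB : IsBrownianMotion μ B) (t ε x : ℝ) (hx : 0 < x)
    (hε : 0 < ε)
    (Xt Xe : ℝ → Ω → ℝ)
    (hXt : ∀ᵐ ω ∂μ, ContinuousOn (fun u => Xt u ω) (Set.Icc 0 (1 - t)) ∧
      ∀ u ∈ Set.Icc (0:ℝ) (1 - t),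
        Xt u ω = x - (∫ r in (0:ℝ)..u, Xt r ω / (1 - (t + r))) + B u ω)
    (hXe : ∀ᵐ ω ∂μ, ContinuousOn (fun u => Xe u ω) (Set.Icc 0 (1 - t)) ∧
      ∀ u ∈ Set.Icc (0:ℝ) (1 - t),
        Xe u ω = x - (∫ r in (0:ℝ)..u, Xe r ω / (1 - (t - ε + r))) + B u ω)
    (hhit : ∀ᵐ ω ∂μ, ∃ u ∈ Set.Icc (0:ℝ) (1 - t), Xt u ω ≤ 0) :
    ∀ᵐ ω ∂μ, ∀ s ∈ Set.Icc (0:ℝ) (1 - t),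
      0 ≤ Xt (min s (sInf {u | u ∈ Set.Icc (0:ℝ) (1 - t) ∧ Xt u ω ≤ 0})) ω ∧
      Xt (min s (sInf {u | u ∈ Set.Icc (0:ℝ) (1 - t) ∧ Xt u ω ≤ 0})) ω
        ≤ Xe (min s (sInf {u | u ∈ Set.Icc (0:ℝ) (1 - t) ∧ Xt u ω ≤ 0})) ω := by
  filter_upwards [hXt, hXe, hhit] with ω ⟨hXtc, hXteq⟩ ⟨hXec, hXeeq⟩ hhitω
  set τ := sInf {u | u ∈ Icc (0:ℝ) (1 - t) ∧ Xt u ω ≤ 0}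
  obtain ⟨⟨hτ0, hτT⟩, -⟩ := sInf_nonpos_mem hXtc hhitω
  have hXt0 : Xt 0 ω = x := by simpa [hB.init ω] using hXteq 0 ⟨le_rfl, hτ0.trans hτT⟩
  have hXe0 : Xe 0 ω = x := by simpa [hB.init ω] using hXeeq 0 ⟨le_rfl, hτ0.trans hτT⟩
  have hXtτ : Xt τ ω = 0 := apply_sInf_nonpos_eq_zero hXtc (hXt0 ▸ hx.le) hhitω
  have hXt_pos : ∀ u ∈ Ico 0 τ, 0 < Xt u ω := fun u hu =>
    pos_of_lt_sInf_nonpos ⟨hu.1, hu.2.le.trans hτT⟩ hu.2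
  have hderiv : ∀ u ∈ Ioo 0 (1 - t), HasDerivAt (fun v => Xt v ω - Xe v ω)
      (Xe u ω / (1 - (t - ε + u)) - Xt u ω / (1 - (t + u))) u := fun u hu =>
    hasDerivAt_sub_of_eq_integral (hXtc.mono Ico_subset_Icc_self)
      (hXec.mono Ico_subset_Icc_self) (by fun_prop) (by fun_prop)
      (fun r hr => by linarith [hr.2]) (fun r hr => by linarith [hr.2])
      (fun v hv => hXteq v (Ico_subset_Icc_self hv))
      (fun v hv => hXeeq v (Ico_subset_Icc_self hv)) hu
  have hY : ∀ u ∈ Icc 0 τ, Xt u ω - Xe u ω ≤ 0 := fun u hu =>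
    nonpos_of_hasDerivAt_le_neg_div (c := 1 - t + ε) (by linarith)
      ((hXtc.sub hXec).mono (Icc_subset_Icc_right hτT)) (by simp [hXt0, hXe0])
      (fun v hv => hderiv v ⟨hv.1, hv.2.trans_le hτT⟩)
      (fun v hv => by
        rw [show 1 - t + ε - v = 1 - (t - ε + v) by ring]
        exact div_sub_div_le_neg_sub_div (hXt_pos v (Ioo_subset_Ico_self hv)).le
          (by linarith [hv.2.trans_le hτT]) (by linarith)) hu
  intro s hs
  have hm : min s τ ∈ Icc 0 τ := ⟨le_min hs.1 hτ0, min_le_right s τ⟩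
  refine ⟨?_, sub_nonpos.mp (hY _ hm)⟩
  rcases hm.2.lt_or_eq with hlt | heq
  · exact (hXt_pos _ ⟨hm.1, hlt⟩).le
  · rw [heq, hXtτ]

/-- pathwise comparison of time-shifted Brownian bridges started from the same
point `x > 0` and driven by the same Brownian motion `B`. Here `Xt u` stands for
`X^{t,x}_{t+u}` and `Xe u` for `X^{t-ε,x}_{t-ε+u}`, both given in integral form, and
`τ⁰ = inf{u ∈ [0,1-t] : X^{t,x}_{t+u} ≤ 0}`. Then a.s.
`X^{t-ε,x}_{t-ε+s∧τ⁰} ≥ X^{t,x}_{t+s∧τ⁰} ≥ 0` for all `s ∈ [0,1-t]`. -/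
theorem shifted_bridge_comparison
    {Ω : Type*} [MeasurableSpace Ω] (μ : Measure Ω) (B : ℝ → Ω → ℝ)
    (hB : IsBrownianMotion μ B) (t ε x : ℝ) (hx : 0 < x)
    (ht : t ∈ Set.Ioo (0:ℝ) 1) (hε : 0 < ε) (hεt : ε ≤ t)
    (Xt Xe : ℝ → Ω → ℝ)
    (hXt : ∀ᵐ ω ∂μ, ContinuousOn (fun u => Xt u ω) (Set.Icc 0 (1 - t)) ∧
      ∀ u ∈ Set.Icc (0:ℝ) (1 - t),
        Xt u ω = x - (∫ r in (0:ℝ)..u, Xt r ω / (1 - (t + r))) + B u ω)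
    (hXe : ∀ᵐ ω ∂μ, ContinuousOn (fun u => Xe u ω) (Set.Icc 0 (1 - t)) ∧
      ∀ u ∈ Set.Icc (0:ℝ) (1 - t),
        Xe u ω = x - (∫ r in (0:ℝ)..u, Xe r ω / (1 - (t - ε + r))) + B u ω)
    (hhit : ∀ᵐ ω ∂μ, ∃ u ∈ Set.Icc (0:ℝ) (1 - t), Xt u ω ≤ 0) :
    ∀ᵐ ω ∂μ, ∀ s ∈ Set.Icc (0:ℝ) (1 - t),
      0 ≤ Xt (min s (sInf {u | u ∈ Set.Icc (0:ℝ) (1 - t) ∧ Xt u ω ≤ 0})) ω ∧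
      Xt (min s (sInf {u | u ∈ Set.Icc (0:ℝ) (1 - t) ∧ Xt u ω ≤ 0})) ω
        ≤ Xe (min s (sInf {u | u ∈ Set.Icc (0:ℝ) (1 - t) ∧ Xt u ω ≤ 0})) ω :=
  shifted_bridge_comparison_general μ B hB t ε x hx hε Xt Xe hXt hXe hhit

end
end

section
/- Suppose the optimal boundary satisfies $b(t_0-) > b(t_0)$ at some $t_0 \in (0,1)$ where $b$ is non-increasing, $b \ge \tfrac12(1-\cdot)$, and $v$ solves $\partial_t v + \tfrac12\partial_{xx}v - \tfrac{x}{1-t}\partial_x v = 0$ on $\mathcal{C}$ with $\partial_t v \le 0$ and $v(t_0, y) = e^y$ for $y \in (b(t_0), b(t_0-))$. Then for every non-negative $\varphi \in C_c^\infty((x_1, x_2))$ with $[x_1,x_2] \subset (b(t_0), b(t_0-))$, one has $0 \le \int_{x_1}^{x_2} e^y\left(\tfrac12 - \tfrac{y}{1-t_0}\right)\varphi(y)\,dy$, which is a contradiction since $y \ge x_1 > \tfrac{1-t_0}{2}$ on the support. Hence $b$ is left-continuous on $(0,1)$. -/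
/-!
If `b` jumped down at `t₀`, an interval `[x₁, x₂]` would lie in the continuation region at every
time `t < t₀` but in the stopping region at `t₀`. For a nonnegative test function `φ` supported in
`[x₁, x₂]`, Green's formula and the PDE give `∫ v(t,·) L*φ = -∫ ∂ₜv(t,·) φ ≥ 0` for `t < t₀`, and
by continuity of `v` this survives as `t ↑ t₀`, where `v(t₀,·) = exp`. But
`L exp = (½ - y/(1-t₀)) eʸ < 0` on `[x₁, x₂]` since `x₁ > b(t₀) ≥ (1-t₀)/2`, so
`∫ exp L*φ = ∫ (L exp) φ < 0`.
-/

open MeasureTheory Real Set Filter Topology intervalIntegral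

noncomputable section

lemma continuousOn_parametric_intervalIntegral_of_continuousOn {X E : Type*}
    [TopologicalSpace X] [NormedAddCommGroup E] [NormedSpace ℝ E] {f : X → ℝ → E} {s : Set X}
    (hf : ContinuousOn (fun p : X × ℝ => f p.1 p.2) (s ×ˢ univ)) (a b : ℝ) :
    ContinuousOn (fun x => ∫ y in a..b, f x y) s := by
  rw [continuousOn_iff_continuous_domRestrict]
  refine continuous_parametric_intervalIntegral_of_continuous'
    (f := fun x : s => f x) ?_ a b
  exact hf.comp_continuous (continuous_subtype_val.prodMap continuous_id)
    fun p => ⟨p.1.2, mem_univ _⟩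

lemma AntitoneOn.continuousWithinAt_Iio_of_forall_exists_lt {f : ℝ → ℝ} {s : Set ℝ} {a : ℝ}
    (hf : AntitoneOn f s) (hs : s ∈ 𝓝[≤] a) (h : ∀ ε > 0, ∃ t ∈ s, t < a ∧ f t < f a + ε) :
    ContinuousWithinAt f (Iio a) a := by
  have has : a ∈ s := mem_of_mem_nhdsWithin self_mem_Iic hs
  have hs' : s ∈ 𝓝[<] a := nhdsWithin_mono _ Iio_subset_Iic_self hs
  refine tendsto_order.2 ⟨fun c hc => ?_, fun c hc => ?_⟩
  · filter_upwards [hs', self_mem_nhdsWithin] with t hts hta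
    exact hc.trans_le (hf hts has (le_of_lt hta))
  · obtain ⟨t, hts, hta, hft⟩ := h (c - f a) (sub_pos.2 hc)
    filter_upwards [hs', Ioo_mem_nhdsLT hta] with x hxs hx
    exact (hf hts hxs hx.1.le).trans_lt (by linarith)

/-- The formal adjoint `φ ↦ ½ φ'' + r (y φ)'` of `u ↦ ½ u'' - r y u'`; the paper's `L*` at time `t`
is the case `r = 1 / (1 - t)`. -/
def adjointGenerator (r : ℝ) (φ : ℝ → ℝ) (y : ℝ) : ℝ :=
  deriv (deriv φ) y / 2 + r * (φ y + y * deriv φ y)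

/-- What is used of a test function in `C_c^∞((x₁, x₂))`: it is `C²` and it vanishes to first
order at both endpoints, so that integration by parts over `[x₁, x₂]` has no boundary terms. -/
structure IsTestFunction (x₁ x₂ : ℝ) (φ : ℝ → ℝ) : Prop where
  contDiff : ContDiff ℝ 2 φ
  apply_left : φ x₁ = 0
  apply_right : φ x₂ = 0
  deriv_left : deriv φ x₁ = 0
  deriv_right : deriv φ x₂ = 0

lemma ContDiff.continuous_deriv_deriv {φ : ℝ → ℝ} (hφ : ContDiff ℝ 2 φ) :
    Continuous (deriv (deriv φ)) :=
  (hφ.deriv' (n := 1)).continuous_deriv le_rfl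

lemma ContDiff.hasDerivAt_deriv {φ : ℝ → ℝ} (hφ : ContDiff ℝ 2 φ) (y : ℝ) :
    HasDerivAt (deriv φ) (deriv (deriv φ) y) y :=
  ((hφ.deriv' (n := 1)).differentiable one_ne_zero y).hasDerivAt

lemma continuous_adjointGenerator {φ : ℝ → ℝ} (hφ : ContDiff ℝ 2 φ) :
    Continuous fun p : ℝ × ℝ => adjointGenerator p.1 φ p.2 := by
  have := hφ.continuous
  have := hφ.continuous_deriv one_le_two
  have := hφ.continuous_deriv_deriv
  unfold adjointGenerator
  fun_prop

lemma exists_isTestFunction_pos (x₁ x₂ : ℝ) :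
    ∃ φ, IsTestFunction x₁ x₂ φ ∧ ∀ y ∈ Ioo x₁ x₂, 0 < φ y := by
  have hderiv (y : ℝ) : HasDerivAt (fun y => ((y - x₁) * (x₂ - y)) ^ 2)
      (2 * ((y - x₁) * (x₂ - y)) * (x₁ + x₂ - 2 * y)) y :=
    (((hasDerivAt_id' y).sub_const x₁).fun_mul ((hasDerivAt_id' y).const_sub x₂)).fun_pow 2
      |>.congr_deriv (by push_cast; ring)
  refine ⟨fun y => ((y - x₁) * (x₂ - y)) ^ 2, ⟨by fun_prop, by simp, by simp, ?_, ?_⟩, ?_⟩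
  · simp [(hderiv x₁).deriv]
  · simp [(hderiv x₂).deriv]
  · exact fun y hy => pow_pos (mul_pos (sub_pos.2 hy.1) (sub_pos.2 hy.2)) 2

/-- The boundary term of Green's formula for the pair `½ u'' - r y u'` and `adjointGenerator r`. -/
def greenFlux (r : ℝ) (u u' φ : ℝ → ℝ) (y : ℝ) : ℝ :=
  (u y * deriv φ y - u' y * φ y) / 2 + r * y * u y * φ y

section Green

variable {r x₁ x₂ : ℝ} {u u' φ : ℝ → ℝ}

lemma hasDerivAt_greenFlux {y u'' : ℝ} (hu : HasDerivAt u (u' y) y) (hu' : HasDerivAt u' u'' y)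
    (hφ : ContDiff ℝ 2 φ) :
    HasDerivAt (greenFlux r u u' φ)
      (u y * adjointGenerator r φ y - (u'' / 2 - r * y * u' y) * φ y) y := by
  have hφ' : HasDerivAt φ (deriv φ y) y := (hφ.differentiable two_ne_zero y).hasDerivAt
  refine (((hu.fun_mul (hφ.hasDerivAt_deriv y)).fun_sub (hu'.fun_mul hφ')).div_const 2
    |>.fun_add ((((hasDerivAt_id' y).const_mul r).fun_mul hu).fun_mul hφ')).congr_deriv ?_
  simp only [adjointGenerator]
  ring

lemma IsTestFunction.greenFlux_left (hφ : IsTestFunction x₁ x₂ φ) : greenFlux r u u' φ x₁ = 0 := by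
  simp [greenFlux, hφ.apply_left, hφ.deriv_left]

lemma IsTestFunction.greenFlux_right (hφ : IsTestFunction x₁ x₂ φ) :
    greenFlux r u u' φ x₂ = 0 := by
  simp [greenFlux, hφ.apply_right, hφ.deriv_right]

/-- One half of Green's formula `∫ u L*φ = ∫ (L u) φ`; this half needs no integrability of `u''`. -/
lemma integral_mul_adjointGenerator_nonneg {u'' : ℝ → ℝ} (hx : x₁ ≤ x₂)
    (hφ : IsTestFunction x₁ x₂ φ) (hφ_nonneg : ∀ y ∈ Ioo x₁ x₂, 0 ≤ φ y)
    (hu : ∀ y ∈ Icc x₁ x₂, HasDerivAt u (u' y) y) (hu' : ∀ y ∈ Icc x₁ x₂, HasDerivAt u' (u'' y) y)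
    (hLu : ∀ y ∈ Ioo x₁ x₂, 0 ≤ u'' y / 2 - r * y * u' y) :
    0 ≤ ∫ y in x₁..x₂, u y * adjointGenerator r φ y := by
  have hflux (y) (hy : y ∈ Icc x₁ x₂) := hasDerivAt_greenFlux (r := r) (hu y hy) (hu' y hy)
    hφ.contDiff
  have hL : Continuous (adjointGenerator r φ) :=
    (continuous_adjointGenerator hφ.contDiff).comp (Continuous.prodMk_right r)
  have hcont : ContinuousOn (fun y => u y * adjointGenerator r φ y) (Icc x₁ x₂) :=
    ContinuousOn.mul (fun y hy => (hu y hy).continuousAt.continuousWithinAt) hL.continuousOn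
  have := sub_le_integral_of_hasDeriv_right_of_le hx
    (fun y hy => (hflux y hy).continuousAt.continuousWithinAt)
    (fun y hy => (hflux y (Ioo_subset_Icc_self hy)).hasDerivWithinAt) hcont.integrableOn_Icc
    (fun y hy => sub_le_self _ (mul_nonneg (hLu y hy) (hφ_nonneg y hy)))
  rwa [hφ.greenFlux_left, hφ.greenFlux_right, sub_zero] at this

lemma integral_exp_mul_adjointGenerator (hφ : IsTestFunction x₁ x₂ φ) :
    ∫ y in x₁..x₂, exp y * adjointGenerator r φ y =
      ∫ y in x₁..x₂, exp y * (1 / 2 - r * y) * φ y := by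
  have hL : Continuous (adjointGenerator r φ) :=
    (continuous_adjointGenerator hφ.contDiff).comp (Continuous.prodMk_right r)
  have hφc := hφ.contDiff.continuous
  have hflux (y) : HasDerivAt (greenFlux r exp exp φ)
      (exp y * adjointGenerator r φ y - exp y * (1 / 2 - r * y) * φ y) y :=
    (hasDerivAt_greenFlux (hasDerivAt_exp y) (hasDerivAt_exp y) hφ.contDiff).congr_deriv
      (by ring)
  rw [← sub_eq_zero, ← intervalIntegral.integral_sub ?_ ?_,
    integral_eq_sub_of_hasDerivAt (fun y _ => hflux y) ?_, hφ.greenFlux_left,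
    hφ.greenFlux_right, sub_zero]
  all_goals exact Continuous.intervalIntegrable (by fun_prop) _ _

lemma integral_exp_mul_adjointGenerator_neg (hx : x₁ < x₂) (hφ : IsTestFunction x₁ x₂ φ)
    (hφ_pos : ∀ y ∈ Ioo x₁ x₂, 0 < φ y) (hr : 0 ≤ r) (hrx : 1 / 2 < r * x₁) :
    ∫ y in x₁..x₂, exp y * adjointGenerator r φ y < 0 := by
  have hφc := hφ.contDiff.continuous
  rw [integral_exp_mul_adjointGenerator hφ, ← neg_pos, ← intervalIntegral.integral_neg]
  refine intervalIntegral_pos_of_pos_on (Continuous.intervalIntegrable (by fun_prop) _ _)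
    (fun y hy => ?_) hx
  have hry : 1 / 2 < r * y := hrx.trans_le (mul_le_mul_of_nonneg_left hy.1.le hr)
  exact neg_pos.2 <| mul_neg_of_neg_of_pos
    (mul_neg_of_pos_of_neg (exp_pos y) (by linarith)) (hφ_pos y hy)

end Green

lemma continuousOn_integral_mul_adjointGenerator {v : ℝ → ℝ → ℝ} {φ : ℝ → ℝ} {s : Set ℝ}
    (hv : ContinuousOn (fun p : ℝ × ℝ => v p.1 p.2) (s ×ˢ univ)) (hs : (1 : ℝ) ∉ s)
    (hφ : ContDiff ℝ 2 φ) (x₁ x₂ : ℝ) :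
    ContinuousOn (fun t => ∫ y in x₁..x₂, v t y * adjointGenerator (1 - t)⁻¹ φ y) s := by
  refine continuousOn_parametric_intervalIntegral_of_continuousOn (hv.mul ?_) x₁ x₂
  refine (continuous_adjointGenerator hφ).comp_continuousOn
    (ContinuousOn.prodMk ((continuousOn_const.sub continuousOn_fst).inv₀ ?_) continuousOn_snd)
  rintro ⟨t, y⟩ ⟨ht, -⟩ h
  obtain rfl : t = 1 := (sub_eq_zero.1 h).symm
  exact hs ht

theorem boundary_left_continuous_general
    (v vt vx vxx : ℝ → ℝ → ℝ) (b : ℝ → ℝ)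
    (hv_cont : ContinuousOn (fun p : ℝ × ℝ => v p.1 p.2) (Set.Ico 0 1 ×ˢ Set.univ))
    (hb_mono : AntitoneOn b (Set.Icc 0 1))
    (hb_low : ∀ t ∈ Set.Ico (0:ℝ) 1, (1 - t) / 2 ≤ b t)
    (hvx : ∀ t x : ℝ, t ∈ Set.Ico (0:ℝ) 1 → x < b t →
      HasDerivAt (fun y => v t y) (vx t x) x)
    (hvxx : ∀ t x : ℝ, t ∈ Set.Ico (0:ℝ) 1 → x < b t →
      HasDerivAt (fun y => vx t y) (vxx t x) x)
    (hPDE : ∀ t x : ℝ, t ∈ Set.Ico (0:ℝ) 1 → x < b t →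
      vt t x + vxx t x / 2 - x / (1 - t) * vx t x = 0)
    (hvt_le : ∀ t x : ℝ, t ∈ Set.Ico (0:ℝ) 1 → x < b t → vt t x ≤ 0)
    (hstop : ∀ t x : ℝ, t ∈ Set.Ico (0:ℝ) 1 → b t ≤ x → v t x = Real.exp x) :
    ∀ t₀ ∈ Set.Ioo (0:ℝ) 1, ContinuousWithinAt b (Set.Iio t₀) t₀ := by
  rintro t₀ ⟨ht₀, ht₀1⟩
  refine hb_mono.continuousWithinAt_Iio_of_forall_exists_lt
    (mem_nhdsWithin_of_mem_nhds (Icc_mem_nhds ht₀ ht₀1)) fun ε hε => ?_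
  by_contra! hgap
  set x₁ := b t₀ + ε / 3 with hx₁
  set x₂ := b t₀ + 2 * ε / 3 with hx₂
  have hx : x₁ < x₂ := by linarith
  obtain ⟨φ, hφ, hφ_pos⟩ := exists_isTestFunction_pos x₁ x₂
  have hbefore : ∀ t ∈ Ico 0 t₀, 0 ≤ ∫ y in x₁..x₂, v t y * adjointGenerator (1 - t)⁻¹ φ y := by
    rintro t ⟨ht0, htt₀⟩
    have ht : t ∈ Ico (0 : ℝ) 1 := ⟨ht0, htt₀.trans ht₀1⟩
    have hcont (y) (hy : y ∈ Icc x₁ x₂) : y < b t := by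
      linarith [hy.2, hgap t ⟨ht0, ht.2.le⟩ htt₀]
    refine integral_mul_adjointGenerator_nonneg hx.le hφ (fun y hy => (hφ_pos y hy).le)
      (fun y hy => hvx t y ht (hcont y hy)) (fun y hy => hvxx t y ht (hcont y hy)) fun y hy => ?_
    have hpde := hPDE t y ht (hcont y (Ioo_subset_Icc_self hy))
    have hvt := hvt_le t y ht (hcont y (Ioo_subset_Icc_self hy))
    have hLv : vxx t y / 2 - (1 - t)⁻¹ * y * vx t y = -vt t y := by linear_combination hpde
    linarith
  have hat : 0 ≤ ∫ y in x₁..x₂, v t₀ y * adjointGenerator (1 - t₀)⁻¹ φ y := by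
    have hG := (continuousOn_integral_mul_adjointGenerator hv_cont (by simp) hφ.contDiff x₁ x₂
      t₀ ⟨ht₀.le, ht₀1⟩).mono (Ico_subset_Ico_right ht₀1.le)
    have := right_nhdsWithin_Ico_neBot ht₀
    exact ge_of_tendsto hG (eventually_nhdsWithin_of_forall hbefore)
  rw [integral_congr fun y hy => by
    rw [hstop t₀ y ⟨ht₀.le, ht₀1⟩ (by linarith [(uIcc_of_le hx.le ▸ hy).1])]] at hat
  refine (integral_exp_mul_adjointGenerator_neg hx hφ hφ_pos (inv_nonneg.2 (by linarith)) ?_).not_ge hat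
  rw [lt_inv_mul_iff₀ (by linarith)]
  linarith [hb_low t₀ ⟨ht₀.le, ht₀1⟩]

/-- left-continuity of the optimal boundary on `(0,1)`. Given a non-increasing
boundary `b` with `b(t) ≥ (1-t)/2`, a value function `v` continuous on `[0,1) × ℝ` solving
`∂_t v + ½ ∂_{xx} v - (x/(1-t)) ∂_x v = 0` with `∂_t v ≤ 0` in the continuation region
`C = {(t,x) : t ∈ [0,1), x < b(t)}`, and `v(t,x) = e^x` in the stopping region, a jump
`b(t₀-) > b(t₀)` would yield, for every non-negative test function `φ` supported in the gap,
the contradictory inequality `0 ≤ ∫ e^y (1/2 - y/(1-t₀)) φ(y) dy`; hence `b` is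
left-continuous at every `t₀ ∈ (0,1)`. -/
theorem boundary_left_continuous
    (v vt vx vxx : ℝ → ℝ → ℝ) (b : ℝ → ℝ)
    (hv_cont : ContinuousOn (fun p : ℝ × ℝ => v p.1 p.2) (Set.Ico 0 1 ×ˢ Set.univ))
    (hb_mono : AntitoneOn b (Set.Icc 0 1))
    (hb_low : ∀ t ∈ Set.Ico (0:ℝ) 1, (1 - t) / 2 ≤ b t)
    (hvt : ∀ t x : ℝ, t ∈ Set.Ico (0:ℝ) 1 → x < b t →
      HasDerivAt (fun s => v s x) (vt t x) t)
    (hvx : ∀ t x : ℝ, t ∈ Set.Ico (0:ℝ) 1 → x < b t →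
      HasDerivAt (fun y => v t y) (vx t x) x)
    (hvxx : ∀ t x : ℝ, t ∈ Set.Ico (0:ℝ) 1 → x < b t →
      HasDerivAt (fun y => vx t y) (vxx t x) x)
    (hPDE : ∀ t x : ℝ, t ∈ Set.Ico (0:ℝ) 1 → x < b t →
      vt t x + vxx t x / 2 - x / (1 - t) * vx t x = 0)
    (hvt_le : ∀ t x : ℝ, t ∈ Set.Ico (0:ℝ) 1 → x < b t → vt t x ≤ 0)
    (hstop : ∀ t x : ℝ, t ∈ Set.Ico (0:ℝ) 1 → b t ≤ x → v t x = Real.exp x) :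
    ∀ t₀ ∈ Set.Ioo (0:ℝ) 1, ContinuousWithinAt b (Set.Iio t₀) t₀ :=
  boundary_left_continuous_general v vt vx vxx b hv_cont hb_mono hb_low hvx hvxx hPDE hvt_le hstop

end
end
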